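/- Let m, n ≥ 1 and let 1 ≤ r ≤ m. For every natural number s in the r-th chamber, i.e. (r−1)n ≤ s ≤ rn, the Gaussian polynomial coefficient is given by: P_m^n(s) = W_m(s) + Σ_{i=1}^{r−1} (−1)^{i} Σ_{k=0}^{s − i n − s_i} W_{m−i}(k) · W_i(s − n i − s_i − k), where any inner sum whose upper limit is negative is empty (equals 0). -/

import Mathlib

/-!
Work with generating functions in `ℤ⟦X⟧`. Splitting off the last coordinate shows that
`G m n = ∑ₛ P_m^n(s) Xˢ` satisfies Pascal's rule
`G (m+1) (n+1) = G m (n+1) + X^(m+1) G (m+1) n` with `G 0 n = G m 0 = 1`, and that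
`w j = ∑ₜ W_j(t) Xᵗ` satisfies `w (j+1) = w j + X^(j+1) w (j+1)`.
The latter recursion, applied to either factor of `w (m-i) * w i`, shows that
`C m n = ∑_{i ≤ m} (-1)^i X^(n i + s_i) w (m-i) w i` obeys the same Pascal rule, and that
`(1 - X^(m+1)) (C (m+1) 0 - C m 0) = 0`, whence `C m 0 = 1`. So `G = C`; reading off the
coefficient of `Xˢ`, the terms with `i ≥ r` vanish since their order `n i + s_i` exceeds `s ≤ r n`.
-/

open Finset

/-- `W t d` : the number of tuples `x` of nonnegative integers with `∑ i, d i * x i = t`. -/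
noncomputable def W (t : ℤ) (d : List ℕ) : ℕ :=
  Nat.card {x : Fin d.length → ℕ // ∑ i, (d.get i : ℤ) * (x i : ℤ) = t}

/-- `Wm j t` : the restricted partition function `W(t, (1,2,…,j))`. -/
noncomputable def Wm (j : ℕ) (t : ℤ) : ℕ :=
  W t ((List.range j).map (· + 1))

/-- `P m n s` : the Gaussian polynomial coefficient, i.e. the number of tuples
`(x_1,…,x_m)` of nonnegative integers with `∑ i, i * x_i = s` and `∑ i, x_i ≤ n`. -/
noncomputable def P (m n s : ℕ) : ℕ :=
  Nat.card {x : Fin m → ℕ // (∑ i : Fin m, ((i : ℕ) + 1) * x i = s) ∧ ∑ i, x i ≤ n}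

/-- `tri j = j(j+1)/2`, the `j`-th triangular number. -/
def tri (j : ℕ) : ℕ := j * (j + 1) / 2

open PowerSeries

section Counting

theorem sum_le_sum_succ_mul {m : ℕ} (x : Fin m → ℕ) :
    ∑ i, x i ≤ ∑ i : Fin m, ((i : ℕ) + 1) * x i :=
  sum_le_sum fun i _ => Nat.le_mul_of_pos_left _ i.val.succ_pos

theorem finite_P_solutions (m n s : ℕ) :
    Finite {x : Fin m → ℕ // (∑ i : Fin m, ((i : ℕ) + 1) * x i = s) ∧ ∑ i, x i ≤ n} :=
  Set.Finite.to_subtype <| (Set.Finite.pi fun _ => Set.finite_Iic n).subset fun x hx i _ =>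
    (single_le_sum (fun j _ => Nat.zero_le (x j)) (mem_univ i)).trans hx.2

def subtypeNatProdEquivSum {α : Type*} (Q : ℕ × α → Prop) :
    {p : ℕ × α // Q p} ≃ {a // Q (0, a)} ⊕ {p : ℕ × α // Q (p.1 + 1, p.2)} where
  toFun
    | ⟨(0, a), h⟩ => .inl ⟨a, h⟩
    | ⟨(c + 1, a), h⟩ => .inr ⟨(c, a), h⟩
  invFun := Sum.elim (fun a => ⟨(0, a.1), a.2⟩) (fun p => ⟨(p.1.1 + 1, p.1.2), p.2⟩)
  left_inv := by rintro ⟨⟨_ | c, a⟩, h⟩ <;> rfl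
  right_inv := by rintro (⟨a, h⟩ | ⟨⟨c, a⟩, h⟩) <;> rfl

theorem card_subtype_nat_prod {α : Type*} (Q : ℕ × α → Prop) [Finite {p : ℕ × α // Q p}] :
    Nat.card {p : ℕ × α // Q p} =
      Nat.card {a // Q (0, a)} + Nat.card {p : ℕ × α // Q (p.1 + 1, p.2)} := by
  have := Finite.of_equiv _ (subtypeNatProdEquivSum Q)
  have := Finite.sum_left {p : ℕ × α // Q (p.1 + 1, p.2)} (α := {a // Q (0, a)})
  have := Finite.sum_right {a // Q (0, a)} (β := {p : ℕ × α // Q (p.1 + 1, p.2)})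
  rw [Nat.card_congr (subtypeNatProdEquivSum Q), Nat.card_sum]

def snocSolutionsEquiv (m n s : ℕ) :
    {p : ℕ × (Fin m → ℕ) //
      ∑ i : Fin m, ((i : ℕ) + 1) * p.2 i + (m + 1) * p.1 = s ∧ ∑ i, p.2 i + p.1 ≤ n} ≃
    {x : Fin (m + 1) → ℕ // (∑ i : Fin (m + 1), ((i : ℕ) + 1) * x i = s) ∧ ∑ i, x i ≤ n} :=
  (Fin.snocEquiv fun _ => ℕ).subtypeEquiv fun p => by simp [Fin.sum_univ_castSucc]

theorem P_succ_eq_card (m n s : ℕ) :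
    P (m + 1) n s = Nat.card {p : ℕ × (Fin m → ℕ) //
      ∑ i : Fin m, ((i : ℕ) + 1) * p.2 i + (m + 1) * p.1 = s ∧ ∑ i, p.2 i + p.1 ≤ n} :=
  (Nat.card_congr (snocSolutionsEquiv m n s)).symm

theorem P_succ (m n s : ℕ) :
    P (m + 1) n s = P m n s + Nat.card {p : ℕ × (Fin m → ℕ) //
      ∑ i : Fin m, ((i : ℕ) + 1) * p.2 i + (m + 1) * (p.1 + 1) = s ∧
        ∑ i, p.2 i + (p.1 + 1) ≤ n} := by
  have := finite_P_solutions (m + 1) n s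
  have := Finite.of_equiv _ (snocSolutionsEquiv m n s).symm
  rw [P_succ_eq_card, card_subtype_nat_prod]
  simp only [mul_zero, add_zero, P]

theorem P_zero_left (n s : ℕ) : P 0 n s = if s = 0 then 1 else 0 := by
  split_ifs with hs <;> simp [P, eq_comm, hs]

theorem P_succ_zero (m s : ℕ) : P (m + 1) 0 s = P m 0 s := by
  rw [P_succ, add_eq_left, Nat.card_eq_zero]
  exact .inl ⟨fun ⟨_, h⟩ => by omega⟩

theorem P_zero_right (m s : ℕ) : P m 0 s = if s = 0 then 1 else 0 := by
  induction m with
  | zero => exact P_zero_left 0 s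
  | succ m ih => rw [P_succ_zero, ih]

theorem P_succ_of_lt {m s : ℕ} (n : ℕ) (hs : s < m + 1) : P (m + 1) n s = P m n s := by
  rw [P_succ, add_eq_left, Nat.card_eq_zero]
  exact .inl ⟨fun ⟨p, h⟩ => by
    have := Nat.le_mul_of_pos_right (m + 1) (by omega : 0 < p.1 + 1)
    omega⟩

theorem P_succ_succ_add (m n s : ℕ) :
    P (m + 1) (n + 1) (s + (m + 1)) = P m (n + 1) (s + (m + 1)) + P (m + 1) n s := by
  rw [P_succ, P_succ_eq_card (n := n)]
  congr 1
  refine Nat.card_congr (Equiv.subtypeEquivRight fun p => ?_)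
  constructor <;> rintro ⟨h₁, h₂⟩ <;> constructor <;> linarith

theorem Wm_natCast (j : ℕ) {t n : ℕ} (h : t ≤ n) : Wm j t = P j n t := by
  have hl : ((List.range j).map (· + 1)).length = j := by simp
  refine Nat.card_congr ((finCongr hl).arrowCongr (Equiv.refl ℕ) |>.subtypeEquiv fun x => ?_)
  rw [← (finCongr hl).symm.sum_comp]
  simp only [finCongr_symm, finCongr_apply, List.get_eq_getElem, Fin.val_cast, List.getElem_map,
    List.getElem_range, Equiv.arrowCongr_apply, Equiv.coe_refl, Function.comp_apply, id_eq]
  norm_cast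
  exact ⟨fun hx => ⟨hx, (sum_le_sum_succ_mul _).trans (hx.trans_le h)⟩, And.left⟩

end Counting

section GeneratingFunctions

theorem PowerSeries.mk_eq_add_X_pow_mul {R : Type*} [Semiring R] {f g h : ℕ → R} (k : ℕ)
    (hlt : ∀ s < k, f s = g s) (hadd : ∀ s, f (s + k) = g (s + k) + h s) :
    mk f = mk g + X ^ k * mk h := by
  ext s
  rw [map_add, coeff_X_pow_mul']
  split_ifs with hk
  · obtain ⟨t, rfl⟩ := Nat.exists_eq_add_of_le' hk
    simp [hadd]
  · simp [hlt s (by omega)]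

noncomputable def gaussSeries (m n : ℕ) : ℤ⟦X⟧ := mk fun s => (P m n s : ℤ)

noncomputable def wSeries (j : ℕ) : ℤ⟦X⟧ := mk fun t => (Wm j t : ℤ)

theorem gaussSeries_zero_left (n : ℕ) : gaussSeries 0 n = 1 := by
  ext s
  simp [gaussSeries, P_zero_left, coeff_one]

theorem gaussSeries_zero_right (m : ℕ) : gaussSeries m 0 = 1 := by
  ext s
  simp [gaussSeries, P_zero_right, coeff_one]

theorem gaussSeries_succ_succ (m n : ℕ) :
    gaussSeries (m + 1) (n + 1) = gaussSeries m (n + 1) + X ^ (m + 1) * gaussSeries (m + 1) n :=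
  mk_eq_add_X_pow_mul _ (fun _ hs => by rw [P_succ_of_lt _ hs])
    (fun s => by rw [P_succ_succ_add, Nat.cast_add])

theorem wSeries_zero : wSeries 0 = 1 := by
  ext t
  simp [wSeries, Wm_natCast 0 le_rfl, P_zero_left, coeff_one]

theorem wSeries_succ (j : ℕ) : wSeries (j + 1) = wSeries j + X ^ (j + 1) * wSeries (j + 1) :=
  mk_eq_add_X_pow_mul _ (fun s hs => by simp only [Wm_natCast _ le_rfl, P_succ_of_lt _ hs])
    (fun s => by
      have h : s + (j + 1) ≤ s + j + 1 := by omega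
      rw [Wm_natCast _ h, Wm_natCast _ h, Wm_natCast _ (Nat.le_add_right s j), P_succ_succ_add,
        Nat.cast_add])

end GeneratingFunctions

section ChamberSeries

theorem tri_succ (j : ℕ) : tri (j + 1) = tri j + (j + 1) := by
  unfold tri
  rw [show (j + 1) * (j + 1 + 1) = j * (j + 1) + (j + 1) * 2 by ring,
    Nat.add_mul_div_right _ _ two_pos]

noncomputable def chamberTerm (m n i : ℕ) : ℤ⟦X⟧ :=
  (-1) ^ i * X ^ (n * i + tri i) * (wSeries (m - i) * wSeries i)

noncomputable def chamberSeries (m n : ℕ) : ℤ⟦X⟧ := ∑ i ∈ range (m + 1), chamberTerm m n i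

theorem chamberTerm_succ_left {m i : ℕ} (n : ℕ) (hi : i ≤ m) :
    chamberTerm (m + 1) n i = chamberTerm m n i + X ^ (m + 1 - i) * chamberTerm (m + 1) n i := by
  obtain ⟨d, rfl⟩ := Nat.exists_eq_add_of_le hi
  simp only [chamberTerm, show i + d + 1 - i = d + 1 by omega, Nat.add_sub_cancel_left]
  linear_combination (-1) ^ i * X ^ (n * i + tri i) * wSeries i * wSeries_succ d

theorem chamberTerm_succ_right (m n i : ℕ) :
    chamberTerm (m + 1) n (i + 1) =
      X ^ (i + 1) * chamberTerm (m + 1) n (i + 1) - X ^ (n + i + 1) * chamberTerm m n i := by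
  simp only [chamberTerm, Nat.add_sub_add_right, tri_succ]
  linear_combination (-1) ^ (i + 1) * X ^ (n * (i + 1) + (tri i + (i + 1))) * wSeries (m - i) *
    wSeries_succ i

theorem X_pow_mul_chamberTerm_succ {m i : ℕ} (n : ℕ) (hi : i ≤ m) :
    X ^ (m - i) * chamberTerm m (n + 1) i = X ^ m * chamberTerm m n i := by
  obtain ⟨d, rfl⟩ := Nat.exists_eq_add_of_le hi
  simp only [chamberTerm, Nat.add_sub_cancel_left]
  ring

theorem chamberSeries_zero_left (n : ℕ) : chamberSeries 0 n = 1 := by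
  simp [chamberSeries, chamberTerm, wSeries_zero, tri]

theorem chamberSeries_succ_left (m n : ℕ) :
    chamberSeries (m + 1) n =
      chamberSeries m n + ∑ i ∈ range (m + 2), X ^ (m + 1 - i) * chamberTerm (m + 1) n i := by
  have hsplit : ∀ i ∈ range (m + 1),
      chamberTerm (m + 1) n i = chamberTerm m n i + X ^ (m + 1 - i) * chamberTerm (m + 1) n i :=
    fun i hi => chamberTerm_succ_left n (mem_range_succ_iff.mp hi)
  rw [chamberSeries, sum_range_succ, sum_congr rfl hsplit, sum_add_distrib,
    sum_range_succ _ (m + 1), Nat.sub_self, pow_zero, one_mul, add_assoc, chamberSeries]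

theorem chamberSeries_succ_succ (m n : ℕ) :
    chamberSeries (m + 1) (n + 1) =
      chamberSeries m (n + 1) + X ^ (m + 1) * chamberSeries (m + 1) n := by
  rw [chamberSeries_succ_left]
  unfold chamberSeries
  rw [mul_sum]
  exact congrArg _ <|
    sum_congr rfl fun i hi => X_pow_mul_chamberTerm_succ n (mem_range_succ_iff.mp hi)

theorem chamberSeries_zero_right (m : ℕ) : chamberSeries m 0 = 1 := by
  induction m with
  | zero => exact chamberSeries_zero_left 0
  | succ m ih =>
    have shift : ∀ i ∈ range (m + 1), X ^ (m + 1 - (i + 1)) * chamberTerm (m + 1) 0 (i + 1) =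
        X ^ (m + 1) * (chamberTerm (m + 1) 0 (i + 1) - chamberTerm m 0 i) := by
      intro i hi
      obtain ⟨d, rfl⟩ := Nat.exists_eq_add_of_le (mem_range_succ_iff.mp hi)
      rw [show i + d + 1 - (i + 1) = d by omega]
      linear_combination X ^ d * chamberTerm_succ_right (i + d) 0 i
    have hsum : ∑ i ∈ range (m + 2), X ^ (m + 1 - i) * chamberTerm (m + 1) 0 i =
        X ^ (m + 1) * (chamberSeries (m + 1) 0 - chamberSeries m 0) := by
      rw [sum_range_succ', sum_congr rfl shift, ← mul_sum, sum_sub_distrib, chamberSeries,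
        chamberSeries, sum_range_succ' _ (m + 1), Nat.sub_zero]
      ring
    have hunit : (1 - X ^ (m + 1) : ℤ⟦X⟧) ≠ 0 := fun h => by simpa using congrArg (coeff 0) h
    refine mul_left_cancel₀ hunit ?_
    linear_combination chamberSeries_succ_left m 0 + hsum + (1 - X ^ (m + 1)) * ih

theorem gaussSeries_eq_chamberSeries (m n : ℕ) : gaussSeries m n = chamberSeries m n := by
  induction m generalizing n with
  | zero => rw [gaussSeries_zero_left, chamberSeries_zero_left]
  | succ m ihm =>
    induction n with
    | zero => rw [gaussSeries_zero_right, chamberSeries_zero_right]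
    | succ n ihn => rw [gaussSeries_succ_succ, chamberSeries_succ_succ, ihm, ihn]

theorem coeff_chamberTerm (m n i s : ℕ) :
    coeff s (chamberTerm m n i) = (-1) ^ i * ∑ k ∈ range (((s : ℤ) - i * n - tri i + 1).toNat),
      (Wm (m - i) k : ℤ) * Wm i ((s : ℤ) - n * i - tri i - k) := by
  rw [chamberTerm, mul_assoc, show ((-1) ^ i : ℤ⟦X⟧) = C ((-1) ^ i) by simp, coeff_C_mul,
    coeff_X_pow_mul']
  congr 1
  split_ifs with h
  · obtain ⟨T, rfl⟩ := Nat.exists_eq_add_of_le' h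
    have hT : ((T + (n * i + tri i) : ℕ) : ℤ) - i * n - tri i + 1 = ((T + 1 : ℕ) : ℤ) := by
      push_cast; ring
    rw [coeff_mul, Nat.sum_antidiagonal_eq_sum_range_succ_mk, hT, Int.toNat_natCast,
      Nat.add_sub_cancel]
    refine sum_congr rfl fun k hk => ?_
    have hk : k ≤ T := Nat.lt_succ_iff.mp (mem_range.mp hk)
    simp only [wSeries, coeff_mk]
    congr 3
    push_cast [Nat.cast_sub hk]
    ring
  · rw [Int.toNat_eq_zero.mpr, range_zero, sum_empty]
    have : ((s : ℕ) : ℤ) < ((n * i + tri i : ℕ) : ℤ) := Nat.cast_lt.mpr (not_le.mp h)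
    push_cast at this
    linarith

end ChamberSeries

theorem gaussian_chamber_formula'_general (m n r s : ℕ)
    (hr1 : 1 ≤ r) (hrm : r ≤ m) (hs2 : s ≤ r * n) :
    (P m n s : ℤ) = (Wm m (s : ℤ) : ℤ) +
      ∑ i ∈ Finset.Icc 1 (r - 1), (-1 : ℤ) ^ i *
        ∑ k ∈ Finset.range
            (((s : ℤ) - (i : ℤ) * (n : ℤ) - (tri i : ℤ) + 1).toNat),
          (Wm (m - i) (k : ℤ) : ℤ) *
            (Wm i ((s : ℤ) - (n : ℤ) * (i : ℤ) - (tri i : ℤ) - (k : ℤ)) : ℤ) := by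
  have hP : (P m n s : ℤ) = ∑ i ∈ range (m + 1), coeff s (chamberTerm m n i) := by
    rw [← map_sum, ← chamberSeries, ← gaussSeries_eq_chamberSeries, gaussSeries, coeff_mk]
  have hfirst : coeff s (chamberTerm m n 0) = Wm m s := by
    simp [chamberTerm, wSeries_zero, tri, wSeries.eq_1 m]
  have hbeyond : ∀ i ∈ Ico r (m + 1), coeff s (chamberTerm m n i) = 0 := by
    intro i hi
    obtain ⟨j, rfl⟩ := Nat.exists_eq_add_of_le' (hr1.trans (mem_Ico.mp hi).1)
    have : s < n * (j + 1) + tri (j + 1) := by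
      rw [tri_succ]
      nlinarith [(mem_Ico.mp hi).1]
    rw [chamberTerm, mul_comm _ (X ^ _), mul_assoc, coeff_X_pow_mul', if_neg this.not_ge]
  obtain ⟨q, rfl⟩ := Nat.exists_eq_add_of_le' hr1
  rw [hP, ← sum_range_add_sum_Ico _ (by omega : q + 1 ≤ m + 1), sum_eq_zero hbeyond, add_zero,
    sum_range_eq_add_Ico _ hr1, hfirst, Nat.add_sub_cancel, Ico_add_one_right_eq_Icc]
  exact congrArg _ (sum_congr rfl fun i _ => coeff_chamberTerm m n i s)

/-- in the `r`-th chamber `(r−1)n ≤ s ≤ rn`, the Gaussian polynomial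
coefficient is given by
`P_m^n(s) = W_m(s) + Σ_{i=1}^{r−1} (−1)^{i}
Σ_{k=0}^{s − i n − s_i} W_{m−i}(k) W_i(s − n i − s_i − k)`. -/
theorem gaussian_chamber_formula' (m n r s : ℕ) (hm : 1 ≤ m) (hn : 1 ≤ n)
    (hr1 : 1 ≤ r) (hrm : r ≤ m) (hs1 : (r - 1) * n ≤ s) (hs2 : s ≤ r * n) :
    (P m n s : ℤ) = (Wm m (s : ℤ) : ℤ) +
      ∑ i ∈ Finset.Icc 1 (r - 1), (-1 : ℤ) ^ i *
        ∑ k ∈ Finset.range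
            (((s : ℤ) - (i : ℤ) * (n : ℤ) - (tri i : ℤ) + 1).toNat),
          (Wm (m - i) (k : ℤ) : ℤ) *
            (Wm i ((s : ℤ) - (n : ℤ) * (i : ℤ) - (tri i : ℤ) - (k : ℤ)) : ℤ) :=
  gaussian_chamber_formula'_general m n r s hr1 hrm hs2
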